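/- A(p) is a Hermite ring: every finitely generated stably free A(p)-module is free. (Equivalently, for all k < K, every matrix f ∈ A(p)^{K×k} admitting a left inverse g ∈ A(p)^{k×K} with g·f = I_k can be completed, by adjoining K−k further columns, to a matrix in A(p)^{K×K} that is invertible over A(p).) -/

import Mathlib

open scoped BigOperators

/-- A weight: a sequence of positive reals. -/
structure GoodWeight : Type where
  p : ℕ → ℝ
  pos : ∀ n, 0 < p n

namespace GoodWeight

/-- The growth condition `lim_{n→∞} p(n)^(1/n) = ∞`. -/
def Grows (w : GoodWeight) : Prop :=
  Filter.Tendsto (fun n : ℕ => w.p n ^ ((n : ℝ)⁻¹)) Filter.atTop Filter.atTop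

/-- The Banach algebra `A(p)`, in its sequence model: a sequence `a : ℕ → ℂ` (the
Taylor coefficients at `0` of the corresponding entire function) such that
`sup_n p(n)|a(n)| < ∞`. -/
def Ap (w : GoodWeight) : Type :=
  {a : ℕ → ℂ // ∃ C : ℝ, ∀ n, w.p n * ‖a n‖ ≤ C}

namespace Ap

variable {w : GoodWeight}

instance : Zero w.Ap :=
  ⟨⟨fun _ => 0, 0, fun n => by simp⟩⟩

instance : Add w.Ap :=
  ⟨fun a b =>
    ⟨fun n => a.1 n + b.1 n, by
      obtain ⟨C, hC⟩ := a.2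
      obtain ⟨D, hD⟩ := b.2
      refine ⟨C + D, fun n => ?_⟩
      have h1 : ‖a.1 n + b.1 n‖ ≤ ‖a.1 n‖ + ‖b.1 n‖ :=
        norm_add_le _ _
      calc w.p n * ‖a.1 n + b.1 n‖
          ≤ w.p n * ‖a.1 n‖ + w.p n * ‖b.1 n‖ := by
            rw [← mul_add]; exact mul_le_mul_of_nonneg_left h1 (w.pos n).le
        _ ≤ C + D := add_le_add (hC n) (hD n)⟩⟩

instance : Neg w.Ap :=
  ⟨fun a =>
    ⟨fun n => -a.1 n, by
      obtain ⟨C, hC⟩ := a.2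
      exact ⟨C, fun n => by simpa using hC n⟩⟩⟩

/-- The weighted Hadamard multiplication `(f ∗ g)(n) = p(n) f̂(n) ĝ(n)`. -/
instance : Mul w.Ap :=
  ⟨fun a b =>
    ⟨fun n => (w.p n : ℂ) * a.1 n * b.1 n, by
      obtain ⟨C, hC⟩ := a.2
      obtain ⟨D, hD⟩ := b.2
      refine ⟨C * D, fun n => ?_⟩
      have e : w.p n * ‖(w.p n : ℂ) * a.1 n * b.1 n‖
          = (w.p n * ‖a.1 n‖) * (w.p n * ‖b.1 n‖) := by
        rw [norm_mul, norm_mul, Complex.norm_real, Real.norm_eq_abs, abs_of_pos (w.pos n)]; ring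
      rw [e]
      have h0C : (0:ℝ) ≤ C :=
        le_trans (mul_nonneg (w.pos 0).le (norm_nonneg _)) (hC 0)
      exact mul_le_mul (hC n) (hD n) (mul_nonneg (w.pos n).le (norm_nonneg _)) h0C⟩⟩

/-- The identity element `ε`, with coefficients `1/p(n)`. -/
noncomputable instance : One w.Ap :=
  ⟨⟨fun n => ((w.p n : ℂ))⁻¹, 1, fun n => by
      rw [norm_inv, Complex.norm_real, Real.norm_eq_abs, abs_of_pos (w.pos n),
        mul_inv_cancel₀ (w.pos n).ne']⟩⟩

instance : SMul ℂ w.Ap :=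
  ⟨fun c a =>
    ⟨fun n => c * a.1 n, by
      obtain ⟨C, hC⟩ := a.2
      refine ⟨‖c‖ * C, fun n => ?_⟩
      rw [norm_mul]
      calc w.p n * (‖c‖ * ‖a.1 n‖)
          = ‖c‖ * (w.p n * ‖a.1 n‖) := by ring
        _ ≤ ‖c‖ * C := mul_le_mul_of_nonneg_left (hC n) (norm_nonneg c)⟩⟩

noncomputable instance : CommRing w.Ap where
  add := (· + ·)
  add_assoc a b c := Subtype.ext (funext fun n => add_assoc _ _ _)
  zero := 0
  zero_add a := Subtype.ext (funext fun n => zero_add _)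
  add_zero a := Subtype.ext (funext fun n => add_zero _)
  add_comm a b := Subtype.ext (funext fun n => add_comm _ _)
  nsmul := nsmulRec
  zsmul := zsmulRec
  mul := (· * ·)
  mul_assoc a b c := Subtype.ext (funext fun n => by
    show (w.p n : ℂ) * ((w.p n : ℂ) * a.1 n * b.1 n) * c.1 n
        = (w.p n : ℂ) * a.1 n * ((w.p n : ℂ) * b.1 n * c.1 n)
    ring)
  one := 1
  one_mul a := Subtype.ext (funext fun n => by
    show (w.p n : ℂ) * ((w.p n : ℂ))⁻¹ * a.1 n = a.1 n
    have h : ((w.p n : ℝ) : ℂ) ≠ 0 := by exact_mod_cast (w.pos n).ne'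
    rw [mul_inv_cancel₀ h, one_mul])
  mul_one a := Subtype.ext (funext fun n => by
    show (w.p n : ℂ) * a.1 n * ((w.p n : ℂ))⁻¹ = a.1 n
    have h : ((w.p n : ℝ) : ℂ) ≠ 0 := by exact_mod_cast (w.pos n).ne'
    field_simp)
  left_distrib a b c := Subtype.ext (funext fun n => by
    show (w.p n : ℂ) * a.1 n * (b.1 n + c.1 n)
        = (w.p n : ℂ) * a.1 n * b.1 n + (w.p n : ℂ) * a.1 n * c.1 n
    ring)
  right_distrib a b c := Subtype.ext (funext fun n => by
    show (w.p n : ℂ) * (a.1 n + b.1 n) * c.1 n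
        = (w.p n : ℂ) * a.1 n * c.1 n + (w.p n : ℂ) * b.1 n * c.1 n
    ring)
  zero_mul a := Subtype.ext (funext fun n => by
    show (w.p n : ℂ) * 0 * a.1 n = 0
    ring)
  mul_zero a := Subtype.ext (funext fun n => by
    show (w.p n : ℂ) * a.1 n * 0 = 0
    ring)
  mul_comm a b := Subtype.ext (funext fun n => by
    show (w.p n : ℂ) * a.1 n * b.1 n = (w.p n : ℂ) * b.1 n * a.1 n
    ring)
  neg := Neg.neg
  neg_add_cancel a := Subtype.ext (funext fun n => neg_add_cancel _)

instance : Module ℂ w.Ap where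
  smul := (· • ·)
  one_smul a := Subtype.ext (funext fun n => by
    show (1 : ℂ) * a.1 n = a.1 n
    ring)
  mul_smul c d a := Subtype.ext (funext fun n => by
    show (c * d) * a.1 n = c * (d * a.1 n)
    ring)
  smul_zero c := Subtype.ext (funext fun n => by
    show c * 0 = 0
    ring)
  smul_add c a b := Subtype.ext (funext fun n => by
    show c * (a.1 n + b.1 n) = c * a.1 n + c * b.1 n
    ring)
  add_smul c d a := Subtype.ext (funext fun n => by
    show (c + d) * a.1 n = c * a.1 n + d * a.1 n
    ring)
  zero_smul a := Subtype.ext (funext fun n => by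
    show (0 : ℂ) * a.1 n = 0
    ring)

noncomputable instance : Algebra ℂ w.Ap :=
  Algebra.ofModule
    (fun c a b => Subtype.ext (funext fun n => by
      show (w.p n : ℂ) * (c * a.1 n) * b.1 n = c * ((w.p n : ℂ) * a.1 n * b.1 n)
      ring))
    (fun c a b => Subtype.ext (funext fun n => by
      show (w.p n : ℂ) * a.1 n * (c * b.1 n) = c * ((w.p n : ℂ) * a.1 n * b.1 n)
      ring))

theorem bddAbove (a : w.Ap) :
    BddAbove (Set.range fun n => w.p n * ‖a.1 n‖) := by
  obtain ⟨C, hC⟩ := a.2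
  exact ⟨C, by rintro x ⟨k, rfl⟩; exact hC k⟩

/-- The norm `‖f‖ = sup_n p(n) |f̂(n)|`, as an `AddGroupNorm`. -/
noncomputable def gnorm (w : GoodWeight) : AddGroupNorm w.Ap where
  toFun a := ⨆ n, w.p n * ‖a.1 n‖
  map_zero' := by
    have h : ∀ n : ℕ, w.p n * ‖(0 : w.Ap).1 n‖ = 0 := fun n => by
      show w.p n * ‖0‖ = 0; simp
    simp [h]
  add_le' a b := by
    apply ciSup_le
    intro n
    have h1 : ‖a.1 n + b.1 n‖ ≤ ‖a.1 n‖ + ‖b.1 n‖ :=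
      norm_add_le _ _
    calc w.p n * ‖(a + b).1 n‖
        ≤ w.p n * ‖a.1 n‖ + w.p n * ‖b.1 n‖ := by
          rw [← mul_add]; exact mul_le_mul_of_nonneg_left h1 (w.pos n).le
      _ ≤ (⨆ k, w.p k * ‖a.1 k‖) + ⨆ k, w.p k * ‖b.1 k‖ :=
          add_le_add (le_ciSup (bddAbove a) n) (le_ciSup (bddAbove b) n)
  neg' a := by
    have h : (fun n => w.p n * ‖(-a).1 n‖)
        = fun n => w.p n * ‖a.1 n‖ := by
      funext n
      show w.p n * ‖-a.1 n‖ = w.p n * ‖a.1 n‖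
      rw [norm_neg]
    show (⨆ n, w.p n * ‖(-a).1 n‖) = ⨆ n, w.p n * ‖a.1 n‖
    rw [h]
  eq_zero_of_map_eq_zero' a h := by
    apply Subtype.ext
    funext n
    have h1 : w.p n * ‖a.1 n‖ ≤ 0 := h ▸ le_ciSup (bddAbove a) n
    have h2 : (0:ℝ) ≤ w.p n * ‖a.1 n‖ :=
      mul_nonneg (w.pos n).le (norm_nonneg _)
    have h3 : ‖a.1 n‖ = 0 := by
      rcases mul_eq_zero.mp (le_antisymm h1 h2) with h' | h'
      · exact absurd h' (w.pos n).ne'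
      · exact h'
    exact norm_eq_zero.mp h3

noncomputable instance : NormedAddCommGroup w.Ap :=
  (gnorm w).toNormedAddCommGroup

theorem norm_def (a : w.Ap) : ‖a‖ = ⨆ n, w.p n * ‖a.1 n‖ := rfl

theorem le_norm (a : w.Ap) (n : ℕ) : w.p n * ‖a.1 n‖ ≤ ‖a‖ :=
  le_ciSup (bddAbove a) n

theorem norm_nonneg' (a : w.Ap) : 0 ≤ ‖a‖ :=
  le_trans (mul_nonneg (w.pos 0).le (norm_nonneg _)) (le_norm a 0)

noncomputable instance : NormedCommRing w.Ap :=
  { (inferInstance : NormedAddCommGroup w.Ap), (inferInstance : CommRing w.Ap) with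
    norm_mul_le := by
      intro a b
      apply ciSup_le
      intro n
      have e : w.p n * ‖(a * b).1 n‖
          = (w.p n * ‖a.1 n‖) * (w.p n * ‖b.1 n‖) := by
        show w.p n * ‖(w.p n : ℂ) * a.1 n * b.1 n‖ = _
        rw [norm_mul, norm_mul, Complex.norm_real, Real.norm_eq_abs, abs_of_pos (w.pos n)]; ring
      rw [e]
      exact mul_le_mul (le_norm a n) (le_norm b n)
        (mul_nonneg (w.pos n).le (norm_nonneg _)) (norm_nonneg' a) }

noncomputable instance : NormedSpace ℂ w.Ap where
  norm_smul_le c a := by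
    apply ciSup_le
    intro n
    have e : w.p n * ‖(c • a).1 n‖
        = ‖c‖ * (w.p n * ‖a.1 n‖) := by
      show w.p n * ‖c * a.1 n‖ = _
      rw [norm_mul]; ring
    rw [e]
    calc ‖c‖ * (w.p n * ‖a.1 n‖)
        ≤ ‖c‖ * ‖a‖ := mul_le_mul_of_nonneg_left (le_norm a n) (norm_nonneg c)
      _ = ‖c‖ * ‖a‖ := rfl

noncomputable instance : NormedAlgebra ℂ w.Ap :=
  { (inferInstance : Algebra ℂ w.Ap) with
    norm_smul_le := fun c a => norm_smul_le c a }

end Ap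

end GoodWeight

/-!
Multiplying the `n`-th coefficient by `p(n)` turns the weighted Hadamard product into the
pointwise one, so `A(p)` is isomorphic to the ring `ℓ^∞` of bounded complex sequences.

Let `v, c ∈ (ℓ^∞)ᵈ` with `c ⬝ᵥ v = 1` and `‖c i‖ ≤ C`. At every `n` some entry `v i n` has size at
least `(d C)⁻¹`. Replacing the `i`-th column of the identity matrix by `v n` and moving it to the
front gives a matrix of determinant `± v i n`; for all `n` together these form a matrix over `ℓ^∞`
with first column `v` and determinant bounded away from `0`, hence invertible.

A ring in which every unimodular column is the first column of an invertible matrix is Hermite: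
given `ψ : N × R ≃ Rᵈ`, an automorphism of `Rᵈ` moving `e₀` to `ψ (0, 1)` lets one cancel the
summand `R`, and induction on `k` removes `Rᵏ` from `M × Rᵏ ≃ Rᵐ`.
-/

open Matrix

def UnimodularColumnsCompletable (R : Type*) [CommRing R] : Prop :=
  ∀ (n : ℕ) (v c : Fin (n + 1) → R), c ⬝ᵥ v = 1 →
    ∃ B : Matrix (Fin (n + 1)) (Fin (n + 1)) R, IsUnit B ∧ B.col 0 = v

section Cancel

variable {R M M' Q : Type*} [Ring R] [AddCommGroup M] [AddCommGroup M'] [AddCommGroup Q]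
  [Module R M] [Module R M'] [Module R Q]

theorem LinearEquiv.fst_symm_inl_fst_inl (φ : (M × Q) ≃ₗ[R] (M' × Q))
    (hφ : ∀ q, φ (0, q) = (0, q)) (x : M) : (φ.symm ((φ (x, 0)).1, 0)).1 = x := by
  have h : ((φ (x, 0)).1, (0 : Q)) = φ (x, -(φ (x, 0)).2) := by
    rw [show (x, -(φ (x, 0)).2) = (x, 0) - (0, (φ (x, 0)).2) by simp, map_sub, hφ]
    ext <;> simp
  rw [h, φ.symm_apply_apply]

def LinearEquiv.cancelProdRight (φ : (M × Q) ≃ₗ[R] (M' × Q)) (hφ : ∀ q, φ (0, q) = (0, q)) :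
    M ≃ₗ[R] M' :=
  have hφ' : ∀ q, φ.symm (0, q) = (0, q) := fun q => by rw [φ.symm_apply_eq, hφ]
  LinearEquiv.ofLinearMap (LinearMap.fst R M' Q ∘ₗ φ.toLinearMap ∘ₗ LinearMap.inl R M Q)
    (LinearMap.fst R M Q ∘ₗ φ.symm.toLinearMap ∘ₗ LinearMap.inl R M' Q)
    (LinearMap.ext fun y => φ.symm.fst_symm_inl_fst_inl hφ' y)
    (LinearMap.ext fun x => φ.fst_symm_inl_fst_inl hφ x)

end Cancel

namespace UnimodularColumnsCompletable

variable {R : Type*} [CommRing R]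

theorem of_ringEquiv {S : Type*} [CommRing S] (e : R ≃+* S)
    (h : UnimodularColumnsCompletable S) : UnimodularColumnsCompletable R := by
  intro n v c hcv
  obtain ⟨B, hB, hBv⟩ := h n (e ∘ v) (e ∘ c) (by
    simpa [hcv] using (RingHom.map_dotProduct (e : R →+* S) c v).symm)
  refine ⟨(e.symm : S →+* R).mapMatrix B, hB.map _, funext fun k => ?_⟩
  simp [show B k 0 = e (v k) from congrFun hBv k]

theorem cancel (h : UnimodularColumnsCompletable R) {N : Type*} [AddCommGroup N] [Module R N]
    {n : ℕ} (ψ : (N × R) ≃ₗ[R] (Fin (n + 1) → R)) : Nonempty (N ≃ₗ[R] (Fin n → R)) := by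
  classical
  let π : (Fin (n + 1) → R) →ₗ[R] R := LinearMap.snd R N R ∘ₗ ψ.symm.toLinearMap
  have hπ : ∀ u, (fun i => π (Pi.single i 1)) ⬝ᵥ u = π u := fun u => by
    conv_rhs => rw [← Finset.univ_sum_single u]
    simp only [dotProduct, map_sum, mul_comm]
    refine Finset.sum_congr rfl fun i _ => ?_
    rw [← smul_eq_mul, ← map_smul, ← Pi.single_smul', smul_eq_mul, mul_one]
  obtain ⟨B, hB, hBv⟩ := h n (ψ (0, 1)) _ ((hπ _).trans (by simp [π]))
  let α := B.toLinearEquiv' hB.invertible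
  have hα : α (Pi.single 0 1) = ψ (0, 1) := by
    rw [← hBv, ← mulVec_single_one]
    rfl
  let φ : (N × R) ≃ₗ[R] ((Fin n → R) × R) :=
    ψ ≪≫ₗ α.symm ≪≫ₗ (Fin.consLinearEquiv R fun _ => R).symm ≪≫ₗ LinearEquiv.prodComm R R _
  have hφ : φ (0, 1) = (0, 1) := by
    have htail : Fin.tail (Pi.single 0 1 : Fin (n + 1) → R) = 0 :=
      funext fun i => Pi.single_eq_of_ne (Fin.succ_ne_zero i) _
    simp [φ, (α.symm_apply_eq).2 hα.symm, htail]
  refine ⟨φ.cancelProdRight fun q => ?_⟩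
  calc φ (0, q) = q • φ (0, 1) := by rw [← map_smul, Prod.smul_mk, smul_zero, smul_eq_mul, mul_one]
    _ = (0, q) := by rw [hφ, Prod.smul_mk, smul_zero, smul_eq_mul, mul_one]

theorem free_of_prod_equiv (h : UnimodularColumnsCompletable R) {M : Type*} [AddCommGroup M]
    [Module R M] {k m : ℕ} (φ : (M × (Fin k → R)) ≃ₗ[R] (Fin m → R)) : Module.Free R M := by
  induction k generalizing M m with
  | zero => exact Module.Free.of_equiv (LinearEquiv.prodUnique.symm ≪≫ₗ φ).symm
  | succ k ih =>
    let ψ : ((M × (Fin k → R)) × R) ≃ₗ[R] (Fin m → R) :=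
      LinearEquiv.prodAssoc R M _ R ≪≫ₗ (LinearEquiv.refl R M).prodCongr
        (LinearEquiv.prodComm R _ R ≪≫ₗ Fin.consLinearEquiv R fun _ => R) ≪≫ₗ φ
    cases m with
    | zero =>
      have : Subsingleton R := ⟨fun a b => congrArg Prod.snd
        (ψ.injective (Subsingleton.elim (ψ (0, a)) (ψ (0, b))))⟩
      exact Module.Free.of_subsingleton' R M
    | succ m =>
      obtain ⟨e⟩ := h.cancel ψ
      exact ih e

end UnimodularColumnsCompletable

theorem exists_inv_le_norm_of_dotProduct_eq_one {𝕜 ι : Type*} [NormedField 𝕜] [Fintype ι]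
    {c v : ι → 𝕜} (hcv : c ⬝ᵥ v = 1) {C : ℝ} (hC : 0 < C) (hc : ∀ i, ‖c i‖ ≤ C) :
    ∃ i, (Fintype.card ι * C)⁻¹ ≤ ‖v i‖ := by
  have : Nonempty ι := by
    by_contra hι
    rw [not_nonempty_iff] at hι
    simp [dotProduct] at hcv
  by_contra! hv
  have hcard : (Fintype.card ι : ℝ) * C ≠ 0 := by positivity
  refine lt_irrefl (1 : ℝ) <| calc
    1 = ‖c ⬝ᵥ v‖ := by rw [hcv, norm_one]
    _ ≤ ∑ i, ‖c i‖ * ‖v i‖ := by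
      simpa only [dotProduct, norm_mul] using norm_sum_le Finset.univ fun i => c i * v i
    _ < ∑ _i : ι, C * (Fintype.card ι * C)⁻¹ :=
      Finset.sum_lt_sum_of_nonempty Finset.univ_nonempty fun i _ =>
        (mul_le_mul_of_nonneg_right (hc i) (norm_nonneg _)).trans_lt
          (mul_lt_mul_of_pos_left (hv i) hC)
    _ = 1 := by
      rw [Finset.sum_const, Finset.card_univ, nsmul_eq_mul, ← mul_assoc, mul_inv_cancel₀ hcard]

namespace Matrix

variable {R ι : Type*} [CommRing R] [DecidableEq ι]

def pivotCompletion (v : ι → R) (i₀ i : ι) : Matrix ι ι R :=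
  (updateCol 1 i v).submatrix id (Equiv.swap i₀ i)

variable (v : ι → R) (i₀ i : ι)

theorem pivotCompletion_apply (k j : ι) : pivotCompletion v i₀ i k j =
    if Equiv.swap i₀ i j = i then v k else (1 : Matrix ι ι R) k (Equiv.swap i₀ i j) :=
  updateCol_apply

theorem col_pivotCompletion : (pivotCompletion v i₀ i).col i₀ = v := by
  ext k
  simp [pivotCompletion_apply]

theorem det_pivotCompletion [Fintype ι] :
    (pivotCompletion v i₀ i).det = (Equiv.swap i₀ i).sign * v i := by
  rw [pivotCompletion, det_permute', ← cramer_apply, cramer_one]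
  rfl

theorem norm_pivotCompletion_apply_le {𝕜 : Type*} [NormedField 𝕜] (v : ι → 𝕜) (k j : ι) :
    ‖pivotCompletion v i₀ i k j‖ ≤ ‖v k‖ + 1 := by
  rw [pivotCompletion_apply, one_apply]
  split_ifs <;> simp; positivity

end Matrix

namespace BoundedContinuousFunction

variable {X 𝕜 : Type*} [TopologicalSpace X] [NormedField 𝕜]

def evalRingHom (x : X) : (X →ᵇ 𝕜) →+* 𝕜 where
  toFun f := f x
  map_one' := rfl
  map_mul' _ _ := rfl
  map_zero' := rfl
  map_add' _ _ := rfl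

theorem isUnit_of_forall_le_norm {f : X →ᵇ 𝕜} {δ : ℝ} (hδ : 0 < δ) (hf : ∀ x, δ ≤ ‖f x‖) :
    IsUnit f := by
  have hf0 : ∀ x, f x ≠ 0 := fun x h => by simpa [h] using hδ.trans_le (hf x)
  let g : X →ᵇ 𝕜 := ofNormedAddCommGroup (fun x => (f x)⁻¹) (f.continuous.inv₀ hf0) δ⁻¹
    fun x => by rw [norm_inv]; exact inv_anti₀ hδ (hf x)
  exact IsUnit.of_mul_eq_one g (ext fun x => mul_inv_cancel₀ (hf0 x))

theorem unimodularColumnsCompletable [DiscreteTopology X] :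
    UnimodularColumnsCompletable (X →ᵇ 𝕜) := by
  intro n v c hcv
  have hcv_at : ∀ x, (fun i => c i x) ⬝ᵥ (fun i => v i x) = 1 := fun x => by
    have := (evalRingHom x).map_dotProduct c v
    rwa [hcv, map_one, eq_comm] at this
  set C := ∑ i, ‖c i‖ + 1
  have hC : 0 < C := by positivity
  have hc : ∀ x i, ‖c i x‖ ≤ C := fun x i =>
    (norm_coe_le_norm _ _).trans <| (Finset.single_le_sum (fun j _ => norm_nonneg (c j))
      (Finset.mem_univ i)).trans (le_add_of_nonneg_right zero_le_one)
  choose piv hpiv using fun x => exists_inv_le_norm_of_dotProduct_eq_one (hcv_at x) hC (hc x)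
  let B : Matrix (Fin (n + 1)) (Fin (n + 1)) (X →ᵇ 𝕜) := Matrix.of fun k j =>
    ofNormedAddCommGroupDiscrete (fun x => pivotCompletion (fun i => v i x) 0 (piv x) k j)
      (‖v k‖ + 1) fun x => (norm_pivotCompletion_apply_le _ _ _ _ _).trans
        (by gcongr; exact norm_coe_le_norm _ _)
  have hB_at : ∀ x, (evalRingHom x).mapMatrix B = pivotCompletion (fun i => v i x) 0 (piv x) :=
    fun x => rfl
  refine ⟨B, (isUnit_iff_isUnit_det B).2 <| isUnit_of_forall_le_norm (by positivity : 0 <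
    (Fintype.card (Fin (n + 1)) * C)⁻¹) fun x => ?_, funext fun k => ?_⟩
  · change _ ≤ ‖evalRingHom x B.det‖
    rw [(evalRingHom x).map_det B, hB_at, det_pivotCompletion, norm_mul]
    rcases Int.units_eq_one_or (Equiv.swap 0 (piv x)).sign with h | h <;>
      simpa [h] using hpiv x
  · ext x
    exact congrFun (col_pivotCompletion (fun i => v i x) 0 (piv x)) k

end BoundedContinuousFunction

namespace GoodWeight.Ap

open BoundedContinuousFunction

theorem norm_weight_mul_le {w : GoodWeight} (a : w.Ap) (n : ℕ) :
    ‖(w.p n : ℂ) * a.1 n‖ ≤ ‖a‖ := by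
  rw [norm_mul, Complex.norm_real, Real.norm_of_nonneg (w.pos n).le]
  exact le_norm a n

noncomputable def equivBounded (w : GoodWeight) : w.Ap ≃+* (ℕ →ᵇ ℂ) where
  toFun a :=
    ofNormedAddCommGroupDiscrete (fun n => (w.p n : ℂ) * a.1 n) ‖a‖ (norm_weight_mul_le a)
  invFun f := ⟨fun n => (w.p n : ℂ)⁻¹ * f n, ‖f‖, fun n => by
    rw [norm_mul, norm_inv, Complex.norm_real, Real.norm_of_nonneg (w.pos n).le, ← mul_assoc,
      mul_inv_cancel₀ (w.pos n).ne', one_mul]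
    exact norm_coe_le_norm f n⟩
  left_inv a := Subtype.ext <| funext fun n =>
    inv_mul_cancel_left₀ (Complex.ofReal_ne_zero.2 (w.pos n).ne') _
  right_inv f := ext fun n => mul_inv_cancel_left₀ (Complex.ofReal_ne_zero.2 (w.pos n).ne') _
  map_mul' a b := ext fun n =>
    show (w.p n : ℂ) * ((w.p n : ℂ) * a.1 n * b.1 n) = (w.p n * a.1 n) * (w.p n * b.1 n) by ring
  map_add' a b := ext fun n => mul_add _ (a.1 n) (b.1 n)

end GoodWeight.Ap

theorem hermiteRing_general (w : GoodWeight)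
    (M : Type) [AddCommGroup M] [Module w.Ap M]
    (hsf : ∃ (k m : ℕ), Nonempty ((M × (Fin k → w.Ap)) ≃ₗ[w.Ap] (Fin m → w.Ap))) :
    Module.Free w.Ap M := by
  obtain ⟨k, m, ⟨φ⟩⟩ := hsf
  exact (BoundedContinuousFunction.unimodularColumnsCompletable.of_ringEquiv
    (GoodWeight.Ap.equivBounded w)).free_of_prod_equiv φ

/-- `A(p)` is a Hermite ring: every finitely generated stably free
`A(p)`-module is free. -/
theorem hermiteRing (w : GoodWeight) (hg : w.Grows)
    (M : Type) [AddCommGroup M] [Module w.Ap M] [Module.Finite w.Ap M]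
    (hsf : ∃ (k m : ℕ), Nonempty ((M × (Fin k → w.Ap)) ≃ₗ[w.Ap] (Fin m → w.Ap))) :
    Module.Free w.Ap M :=
  hermiteRing_general w M hsf
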